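/- arXiv:2509.20865 — 2 statements merged into one kernel-verified Lean document; each statement's English description precedes it below -/
import Mathlib

section
/- Let D be a full Condorcet domain on X_n with n ≥ 3 that is copious, i.e. its restriction to every triple of X_n has exactly 4 elements. Then D is a maximal Condorcet domain. -/
/-- A vote (strict linear order) on the set of alternatives `Fin n`, encoded as
the permutation sending each position (`0` = top) to the alternative placed in
that position. -/
abbrev Vote (n : ℕ) := Equiv.Perm (Fin n)

/-- `v` ranks `a` above `b`. -/
def Above {n : ℕ} (v : Vote n) (a b : Fin n) : Prop := v.symm a < v.symm b

instance {n : ℕ} (v : Vote n) (a b : Fin n) : Decidable (Above v a b) :=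
  inferInstanceAs (Decidable (v.symm a < v.symm b))

/-- The majority relation of a list of votes: `a` is ranked above `b` iff more
than half of the votes rank `a` above `b`. -/
def Maj {n : ℕ} (l : List (Vote n)) (a b : Fin n) : Prop :=
  l.length < 2 * l.countP (fun v => decide (Above v a b))

/-- A Condorcet domain: for every odd-length list of votes from `D` the
majority relation is a strict linear order on the alternatives. -/
def IsCondorcet {n : ℕ} (D : Set (Vote n)) : Prop :=
  ∀ l : List (Vote n), Odd l.length → (∀ v ∈ l, v ∈ D) →
    IsStrictTotalOrder (Fin n) (Maj l)

/-- The position (`0` = top) of `x` in the restriction of `v` to the triple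
`{a, b, c}`: the number of elements of the triple ranked above `x` by `v`. -/
def posIn {n : ℕ} (v : Vote n) (a b c x : Fin n) : ℕ :=
  (({a, b, c} : Finset (Fin n)).filter (fun y => Above v y x)).card

/-- The `i`-th smallest element of the triple `a < b < c` (`i : Fin 3`,
0-indexed). -/
def tElem {n : ℕ} (a b c : Fin n) (i : Fin 3) : Fin n :=
  if i = 0 then a else if i = 1 then b else c

/-- The vote `v` satisfies the never condition `iNj` on the triple `a < b < c`
(`i j : Fin 3`, both 0-indexed): the `i`-th smallest element of the triple is
not in the `j`-th position (from the top) of the restriction of `v` to the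
triple. -/
def VNever {n : ℕ} (v : Vote n) (a b c : Fin n) (i j : Fin 3) : Prop :=
  posIn v a b c (tElem a b c i) ≠ (j : ℕ)

/-- The domain `D` satisfies the never condition `iNj` on the triple
`a < b < c` if every vote in `D` does. -/
def DNever {n : ℕ} (D : Set (Vote n)) (a b c : Fin n) (i j : Fin 3) : Prop :=
  ∀ v ∈ D, VNever v a b c i j

/-- A pair (triple, never condition): the triple is `a < b < c` and the
condition is `iNj` (0-indexed). -/
structure NC (n : ℕ) where
  a : Fin n
  b : Fin n
  c : Fin n
  i : Fin 3
  j : Fin 3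

/-- The pair is valid: its alternatives do form a triple `a < b < c`. -/
def NC.valid {n : ℕ} (p : NC n) : Prop := p.a < p.b ∧ p.b < p.c

/-- The vote `v` satisfies the never condition of the pair `p` on its triple. -/
def NC.holdsFor {n : ℕ} (p : NC n) (v : Vote n) : Prop :=
  VNever v p.a p.b p.c p.i p.j

/-- `N(D)`: the set of all pairs (triple, never condition) satisfied by `D`. -/
def NSet {n : ℕ} (D : Set (Vote n)) : Set (NC n) :=
  {p | p.valid ∧ DNever D p.a p.b p.c p.i p.j}

/-- `D` is full: it contains every vote that satisfies, for every pair in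
`N(D)`, the corresponding never condition. -/
def IsFull {n : ℕ} (D : Set (Vote n)) : Prop :=
  ∀ v : Vote n, (∀ p ∈ NSet D, p.holdsFor v) → v ∈ D

/-- `D` is a maximal Condorcet domain: it is a Condorcet domain and no
Condorcet domain strictly contains it. -/
def IsMaximalCD {n : ℕ} (D : Set (Vote n)) : Prop :=
  IsCondorcet D ∧ ∀ D' : Set (Vote n), IsCondorcet D' → ¬ D ⊂ D'

/-- A set `S` of (triple, never condition) pairs implies the never condition
`iNj` on the triple `a < b < c`: every vote satisfying all the conditions in
`S` satisfies `iNj` on this triple. -/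
def Implies {n : ℕ} (S : Set (NC n)) (a b c : Fin n) (i j : Fin 3) : Prop :=
  ∀ v : Vote n, (∀ p ∈ S, p.holdsFor v) → VNever v a b c i j

/-- `N(D)_T`: the set of pairs in `N(D)` whose triple differs from the triple
`(a, b, c)`. -/
def NSetOff {n : ℕ} (D : Set (Vote n)) (a b c : Fin n) : Set (NC n) :=
  {p ∈ NSet D | (p.a, p.b, p.c) ≠ (a, b, c)}

/-- The action of a bijection `π` of the alternatives on a vote: `π(v)` ranks
`x` above `y` iff `v` ranks `π⁻¹ x` above `π⁻¹ y`.  In our encoding this is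
the composition `π * v`. -/
def pVote {n : ℕ} (π : Equiv.Perm (Fin n)) (v : Vote n) : Vote n := π * v

/-- `π(D) = {π(v) : v ∈ D}`. -/
def pDom {n : ℕ} (π : Equiv.Perm (Fin n)) (D : Set (Vote n)) : Set (Vote n) :=
  pVote π '' D

/-- The standard order `α = 1 2 … n` (alternative `k` in position `k`). -/
def stdOrder (n : ℕ) : Vote n := 1

/-- The restriction of a vote to the triple `a < b < c`, recorded as the
vector of positions (0 = top) of the three elements of the triple. -/
def posVec {n : ℕ} (v : Vote n) (a b c : Fin n) : Fin 3 → ℕ :=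
  fun i => posIn v a b c (tElem a b c i)


/-!
If a Condorcet domain `D'` strictly contained `D`, fullness gives some `v ∈ D' \ D` violating a
never condition `iNj` that `D` satisfies on some triple. Being copious, `D` realises on that triple
all four patterns that avoid `iNj`, in particular the two cyclic shifts of the pattern of `v`. Those
two votes together with `v` form a Condorcet cycle on the triple, so `D'` is not Condorcet.
-/

section Triple

variable {n : ℕ} {a b c : Fin n}

lemma tElem_mem (a b c : Fin n) (k : Fin 3) : tElem a b c k ∈ ({a, b, c} : Finset (Fin n)) := by
  fin_cases k <;> simp [tElem]

lemma tElem_injective (hab : a < b) (hbc : b < c) : Function.Injective (tElem a b c) := by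
  have hac := (hab.trans hbc).ne
  intro k l h
  fin_cases k <;> fin_cases l <;> simp_all [tElem, hab.ne, hbc.ne, hab.ne', hbc.ne', hac.symm]

lemma posIn_lt_three (v : Vote n) {x : Fin n} (hx : x ∈ ({a, b, c} : Finset (Fin n))) :
    posIn v a b c x < 3 :=
  (Finset.card_lt_card <| (Finset.filter_ssubset (p := (Above v · x))).2
    ⟨x, hx, lt_irrefl _⟩).trans_le Finset.card_le_three

lemma posIn_lt_posIn_of_above (v : Vote n) {x y : Fin n} (hx : x ∈ ({a, b, c} : Finset (Fin n)))
    (h : Above v x y) : posIn v a b c x < posIn v a b c y :=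
  Finset.card_lt_card <| (Finset.ssubset_iff_of_subset <| Finset.monotone_filter_right _
    fun _ _ hz => lt_trans hz h).2
    ⟨x, Finset.mem_filter.2 ⟨hx, h⟩, fun hx' => lt_irrefl _ (Finset.mem_filter.1 hx').2⟩

lemma above_iff_posIn_lt (v : Vote n) {x y : Fin n} (hx : x ∈ ({a, b, c} : Finset (Fin n)))
    (hy : y ∈ ({a, b, c} : Finset (Fin n))) :
    Above v x y ↔ posIn v a b c x < posIn v a b c y := by
  refine ⟨posIn_lt_posIn_of_above v hx, fun h => ?_⟩
  rcases lt_trichotomy (v.symm x) (v.symm y) with hlt | heq | hgt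
  · exact hlt
  · rw [v.symm.injective heq] at h
    exact absurd h (lt_irrefl _)
  · exact absurd (posIn_lt_posIn_of_above v hy hgt) h.not_gt

/-- The restriction of `v` to the triple `a < b < c`, as the permutation of `Fin 3` sending `k` to
the position of the `k`-th smallest element. -/
noncomputable def pattern (hab : a < b) (hbc : b < c) (v : Vote n) : Equiv.Perm (Fin 3) :=
  Equiv.ofBijective (fun k => ⟨posIn v a b c (tElem a b c k), posIn_lt_three v (tElem_mem a b c k)⟩)
    (Finite.injective_iff_bijective.1 fun k l h => tElem_injective hab hbc <| by
      by_contra hkl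
      rcases lt_or_gt_of_ne (v.symm.injective.ne hkl) with hlt | hlt
      · exact (posIn_lt_posIn_of_above v (tElem_mem a b c k) hlt).ne (Fin.val_eq_of_eq h)
      · exact (posIn_lt_posIn_of_above v (tElem_mem a b c l) hlt).ne' (Fin.val_eq_of_eq h))

lemma pattern_apply_val (hab : a < b) (hbc : b < c) (v : Vote n) (k : Fin 3) :
    (pattern hab hbc v k : ℕ) = posIn v a b c (tElem a b c k) := rfl

lemma above_tElem_iff (hab : a < b) (hbc : b < c) (v : Vote n) (k l : Fin 3) :
    Above v (tElem a b c k) (tElem a b c l) ↔ pattern hab hbc v k < pattern hab hbc v l := by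
  rw [above_iff_posIn_lt v (tElem_mem a b c k) (tElem_mem a b c l), Fin.lt_def,
    pattern_apply_val, pattern_apply_val]

lemma card_perm_apply_ne (i j : Fin 3) :
    (Finset.univ.filter fun τ : Equiv.Perm (Fin 3) => τ i ≠ j).card = 4 := by
  revert i j; decide

lemma exists_mem_pattern_eq {D : Set (Vote n)} (hab : a < b) (hbc : b < c) {i j : Fin 3}
    (hD : DNever D a b c i j) (hcop : ((fun v => posVec v a b c) '' D).ncard = 4)
    {τ : Equiv.Perm (Fin 3)} (hτ : τ i ≠ j) : ∃ w ∈ D, pattern hab hbc w = τ := by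
  let toVec : Equiv.Perm (Fin 3) → Fin 3 → ℕ := fun τ k => τ k
  have htoVec : Function.Injective toVec := fun σ τ h =>
    Equiv.ext fun k => Fin.val_injective (congrFun h k)
  let avoiding : Set (Equiv.Perm (Fin 3)) := {τ | τ i ≠ j}
  have hsub : (fun v => posVec v a b c) '' D ⊆ toVec '' avoiding := by
    rintro _ ⟨w, hw, rfl⟩
    exact ⟨pattern hab hbc w, fun h => hD w hw (Fin.val_eq_of_eq h), rfl⟩
  have hcard : (toVec '' avoiding).ncard = 4 := by
    rw [Set.ncard_image_of_injective _ htoVec, ← card_perm_apply_ne i j, ← Set.ncard_coe_finset]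
    simp [avoiding]
  have heq := Set.eq_of_subset_of_ncard_le hsub (by rw [hcard, hcop]) (Set.toFinite _)
  obtain ⟨w, hw, hwτ⟩ := heq.symm.subset ⟨τ, hτ, rfl⟩
  exact ⟨w, hw, htoVec hwτ⟩

end Triple

section Majority

variable {n : ℕ}

lemma maj_triple_of_above {u₀ u₁ u₂ : Vote n} {x y : Fin n}
    (h : (Above u₀ x y ∧ Above u₁ x y) ∨ (Above u₀ x y ∧ Above u₂ x y) ∨
      (Above u₁ x y ∧ Above u₂ x y)) :
    Maj [u₀, u₁, u₂] x y := by
  simp only [Maj, List.countP_cons, List.countP_nil, List.length_cons, List.length_nil,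
    decide_eq_true_eq]
  rcases h with ⟨h₀, h₁⟩ | ⟨h₀, h₁⟩ | ⟨h₀, h₁⟩ <;> simp only [h₀, h₁, if_true] <;>
    split_ifs <;> omega

lemma not_isStrictTotalOrder_maj_of_cyclic {u₀ u₁ u₂ : Vote n} {x y z : Fin n}
    (hxy₀ : Above u₀ x y) (hyz₀ : Above u₀ y z) (hyz₁ : Above u₁ y z) (hzx₁ : Above u₁ z x)
    (hzx₂ : Above u₂ z x) (hxy₂ : Above u₂ x y) :
    ¬ IsStrictTotalOrder (Fin n) (Maj [u₀, u₁, u₂]) := by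
  intro _
  have hxy : Maj [u₀, u₁, u₂] x y := maj_triple_of_above (.inr (.inl ⟨hxy₀, hxy₂⟩))
  have hyz : Maj [u₀, u₁, u₂] y z := maj_triple_of_above (.inl ⟨hyz₀, hyz₁⟩)
  have hzx : Maj [u₀, u₁, u₂] z x := maj_triple_of_above (.inr (.inr ⟨hzx₁, hzx₂⟩))
  exact irrefl_of (Maj [u₀, u₁, u₂]) x (trans_of _ (trans_of _ hxy hyz) hzx)

end Majority

theorem stmt9_general {n : ℕ} (D : Set (Vote n)) (hCD : IsCondorcet D)
    (hfull : IsFull D)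
    (hcop : ∀ a b c : Fin n, a < b → b < c →
      ((fun v => posVec v a b c) '' D).ncard = 4) :
    IsMaximalCD D := by
  refine ⟨hCD, fun D' hCD' hDD' => ?_⟩
  obtain ⟨v, hvD', hvD⟩ := Set.exists_of_ssubset hDD'
  obtain ⟨⟨a, b, c, i, j⟩, ⟨⟨hab, hbc⟩, hDN⟩, hv⟩ : ∃ p ∈ NSet D, ¬ p.holdsFor v := by
    by_contra! h
    exact hvD (hfull v h)
  set σ := pattern hab hbc v
  have hσ : σ i = j := Fin.val_injective (not_not.1 hv)
  have hshift (τ : Equiv.Perm (Fin 3)) (hτ : ∀ m, τ m ≠ m) : ∃ w ∈ D, pattern hab hbc w = τ * σ :=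
    exists_mem_pattern_eq hab hbc hDN (hcop a b c hab hbc) (by simpa [hσ] using hτ j)
  obtain ⟨w₁, hw₁D, hw₁⟩ := hshift (finRotate 3).symm (by decide)
  obtain ⟨w₂, hw₂D, hw₂⟩ := hshift (finRotate 3) (by decide)
  -- In a vote with pattern `τ * σ`, the element `x m` of the triple sits at position `τ m`.
  let x (m : Fin 3) := tElem a b c (σ.symm m)
  have above_x {w : Vote n} {τ : Equiv.Perm (Fin 3)} (hw : pattern hab hbc w = τ * σ) {m m'}
      (h : τ m < τ m') : Above w (x m) (x m') := by
    simpa [x, above_tElem_iff hab hbc, hw] using h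
  have hv₀ : pattern hab hbc v = 1 * σ := (one_mul σ).symm
  refine not_isStrictTotalOrder_maj_of_cyclic (x := x 0) (y := x 1) (z := x 2)
    (above_x hv₀ (by decide)) (above_x hv₀ (by decide)) (above_x hw₁ (by decide))
    (above_x hw₁ (by decide)) (above_x hw₂ (by decide)) (above_x hw₂ (by decide))
    (hCD' _ ⟨1, rfl⟩ ?_)
  simp only [List.mem_cons, List.not_mem_nil, or_false]
  rintro u (rfl | rfl | rfl)
  exacts [hvD', hDD'.subset hw₁D, hDD'.subset hw₂D]

/-- A copious full Condorcet domain (its restriction to every triple has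
exactly 4 elements) is a maximal Condorcet domain. -/
theorem stmt9 {n : ℕ} (hn : 3 ≤ n) (D : Set (Vote n)) (hCD : IsCondorcet D)
    (hfull : IsFull D)
    (hcop : ∀ a b c : Fin n, a < b → b < c →
      ((fun v => posVec v a b c) '' D).ncard = 4) :
    IsMaximalCD D :=
  stmt9_general D hCD hfull hcop
end

section
/- (Sen) A domain D on X_n with n ≥ 3 is a Condorcet domain if and only if for every triple T of X_n there exist i, j ∈ {1,2,3} such that D satisfies the never condition iNj on T. -/
/-!
A cyclic triple — votes ranking `x > y > z`, `y > z > x` and `z > x > y` — puts every element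
of `{x, y, z}` in every position, so it violates every never condition on that triple; and it is
exactly what produces a majority cycle, since each pair is ordered the same way by two of the three
votes and any majority cycle of an odd electorate yields one by pigeonhole. It remains to see that a
domain violating every never condition on a triple contains a cyclic triple (in one of its two
orientations): each (element, position) cell is realized by exactly one ranking of each
orientation, and every ranking of one orientation shares a cell with every ranking of the other.
So if both orientations miss a ranking, the cell these two rankings share is never realized.
-/

theorem Finset.exists_lt_lt_eq_of_card_eq_three {α : Type*} [LinearOrder α] {s : Finset α}
    (hs : s.card = 3) : ∃ a b c, a < b ∧ b < c ∧ s = {a, b, c} := by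
  have hf := (s.orderEmbOfFin hs).strictMono
  refine ⟨_, _, _, hf (show (0 : Fin 3) < 1 by decide), hf (show (1 : Fin 3) < 2 by decide), ?_⟩
  ext t
  rw [← Finset.mem_coe, ← s.range_orderEmbOfFin hs, Set.mem_range, Fin.exists_fin_succ,
    Fin.exists_fin_succ, Fin.exists_fin_one]
  simp [eq_comm]

namespace Vote

variable {n : ℕ}

theorem above_irrefl (v : Vote n) (a : Fin n) : ¬ Above v a a := lt_irrefl _

theorem above_asymm {v : Vote n} {a b : Fin n} (h : Above v a b) : ¬ Above v b a := lt_asymm h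

theorem above_or_above {v : Vote n} {a b : Fin n} (h : a ≠ b) : Above v a b ∨ Above v b a :=
  lt_or_gt_of_ne (v.symm.injective.ne h)

def Ranks (v : Vote n) (x y z : Fin n) : Prop := Above v x y ∧ Above v y z

variable {v : Vote n} {x y z : Fin n}

theorem Ranks.ne (h : v.Ranks x y z) : x ≠ y ∧ x ≠ z ∧ y ≠ z :=
  ⟨ne_of_lt h.1 ∘ congrArg v.symm, ne_of_lt (lt_trans h.1 h.2) ∘ congrArg v.symm,
    ne_of_lt h.2 ∘ congrArg v.symm⟩

theorem card_filter_above_triple (hxy : x ≠ y) (hxz : x ≠ z) (hyz : y ≠ z) :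
    (({x, y, z} : Finset (Fin n)).filter (Above v · x)).card
      = (if Above v y x then 1 else 0) + (if Above v z x then 1 else 0) := by
  rw [Finset.card_filter, Finset.sum_insert (by simp [hxy, hxz]),
    Finset.sum_insert (by simp [hyz]), Finset.sum_singleton]
  simp [above_irrefl]

variable (hxy : x ≠ y) (hxz : x ≠ z) (hyz : y ≠ z)
include hxy hxz hyz

theorem card_filter_above_eq_zero_iff :
    (({x, y, z} : Finset (Fin n)).filter (Above v · x)).card = 0 ↔
      Ranks v x y z ∨ Ranks v x z y := by
  rw [card_filter_above_triple hxy hxz hyz]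
  simp only [Ranks, Above]
  grind [v.symm.injective.ne hxy, v.symm.injective.ne hxz, v.symm.injective.ne hyz]

theorem card_filter_above_eq_one_iff :
    (({x, y, z} : Finset (Fin n)).filter (Above v · x)).card = 1 ↔
      Ranks v y x z ∨ Ranks v z x y := by
  rw [card_filter_above_triple hxy hxz hyz]
  simp only [Ranks, Above]
  grind [v.symm.injective.ne hxy, v.symm.injective.ne hxz, v.symm.injective.ne hyz]

theorem card_filter_above_eq_two_iff :
    (({x, y, z} : Finset (Fin n)).filter (Above v · x)).card = 2 ↔
      Ranks v y z x ∨ Ranks v z y x := by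
  rw [card_filter_above_triple hxy hxz hyz]
  simp only [Ranks, Above]
  grind [v.symm.injective.ne hxy, v.symm.injective.ne hxz, v.symm.injective.ne hyz]

end Vote

section Majority

variable {n : ℕ} {l : List (Vote n)} {a b c : Fin n}

theorem countP_above_add_countP_above (h : a ≠ b) :
    l.countP (fun v => decide (Above v a b)) + l.countP (fun v => decide (Above v b a))
      = l.length := by
  rw [List.length_eq_countP_add_countP (fun v => decide (Above v a b))]
  congr 1
  refine List.countP_congr fun v _ => ?_
  simpa using ⟨Vote.above_asymm, (Vote.above_or_above h).resolve_left⟩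

theorem maj_irrefl (l : List (Vote n)) (a : Fin n) : ¬ Maj l a a := by
  simp [Maj, Vote.above_irrefl]

theorem maj_or_maj (hl : Odd l.length) (h : a ≠ b) : Maj l a b ∨ Maj l b a := by
  have := countP_above_add_countP_above (l := l) h
  obtain ⟨m, hm⟩ := hl
  unfold Maj
  omega

theorem exists_mem_ranks_of_maj_of_maj (hab : Maj l a b) (hbc : Maj l b c) :
    ∃ v ∈ l, v.Ranks a b c := by
  by_contra! h
  have hle : l.countP (fun v => decide (Above v b c))
      ≤ l.countP (fun v => ¬ decide (Above v a b)) :=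
    List.countP_mono_left fun v hv hbc => by simpa using fun hab => h v hv ⟨hab, by simpa using hbc⟩
  have := List.length_eq_countP_add_countP (fun v => decide (Above v a b)) (l := l)
  unfold Maj at hab hbc
  omega

theorem maj_of_above_of_above {u v w : Vote n} (hu : Above u a b) (hv : Above v a b) :
    Maj [u, v, w] a b := by
  simp only [Maj, List.countP_cons, List.countP_nil, List.length_cons, List.length_nil, hu, hv,
    decide_true]
  split_ifs <;> simp

theorem maj_rotate (u v w : Vote n) : Maj [u, v, w] = Maj [v, w, u] := by
  ext a b
  simp only [Maj, List.countP_cons, List.countP_nil, List.length_cons, List.length_nil]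
  omega

end Majority

section Domain

variable {n : ℕ} (D : Set (Vote n))

def Realizes (x y z : Fin n) : Prop := ∃ v ∈ D, v.Ranks x y z

def OccursInAllPositions (s : Finset (Fin n)) (x : Fin n) : Prop :=
  ∀ j : Fin 3, ∃ v ∈ D, (s.filter (Above v · x)).card = j

def IsUnrestrictedOn (s : Finset (Fin n)) : Prop := ∀ x ∈ s, OccursInAllPositions D s x

variable {D} {x y z : Fin n}

theorem occursInAllPositions_iff (hxy : x ≠ y) (hxz : x ≠ z) (hyz : y ≠ z)
    {s : Finset (Fin n)} (hs : s = {x, y, z}) :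
    OccursInAllPositions D s x ↔
      (Realizes D x y z ∨ Realizes D x z y) ∧ (Realizes D y x z ∨ Realizes D z x y) ∧
        (Realizes D y z x ∨ Realizes D z y x) := by
  subst hs
  simp [OccursInAllPositions, Realizes, Fin.forall_fin_succ,
    Vote.card_filter_above_eq_zero_iff hxy hxz hyz, Vote.card_filter_above_eq_one_iff hxy hxz hyz,
    Vote.card_filter_above_eq_two_iff hxy hxz hyz, and_or_left, exists_or]

theorem isUnrestrictedOn_iff (hxy : x ≠ y) (hxz : x ≠ z) (hyz : y ≠ z) :
    IsUnrestrictedOn D {x, y, z} ↔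
      (Realizes D x y z ∧ Realizes D y z x ∧ Realizes D z x y) ∨
        (Realizes D x z y ∧ Realizes D z y x ∧ Realizes D y x z) := by
  simp only [IsUnrestrictedOn, Finset.forall_mem_insert, Finset.mem_singleton, forall_eq]
  rw [occursInAllPositions_iff hxy hxz hyz rfl,
    occursInAllPositions_iff hyz hxy.symm hxz.symm (by grind),
    occursInAllPositions_iff hxz.symm hyz.symm hxy (by grind)]
  grind

theorem not_exists_dNever_iff (a b c : Fin n) :
    (¬ ∃ i j, DNever D a b c i j) ↔ IsUnrestrictedOn D {a, b, c} := by
  simp [DNever, VNever, posIn, IsUnrestrictedOn, OccursInAllPositions, Fin.forall_fin_succ, tElem]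

end Domain

theorem isCondorcet_iff_forall_not_realizes_cycle {n : ℕ} (D : Set (Vote n)) :
    IsCondorcet D ↔
      ∀ x y z, ¬ (Realizes D x y z ∧ Realizes D y z x ∧ Realizes D z x y) := by
  constructor
  · rintro hD x y z ⟨⟨u, hu, hxyz⟩, ⟨v, hv, hyzx⟩, ⟨w, hw, hzxy⟩⟩
    have := hD [u, v, w] ⟨1, rfl⟩ (by simp [hu, hv, hw])
    have hxy : Maj [u, v, w] x y := maj_rotate w u v ▸ maj_of_above_of_above hzxy.2 hxyz.1
    have hyz : Maj [u, v, w] y z := maj_of_above_of_above hxyz.2 hyzx.1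
    have hzx : Maj [u, v, w] z x := (maj_rotate u v w).symm ▸ maj_of_above_of_above hyzx.2 hzxy.1
    exact maj_irrefl _ x (trans_of _ (trans_of _ hxy hyz) hzx)
  · intro hD l hl hlD
    refine { trichotomous := fun a b => ?_, irrefl := maj_irrefl l, trans := fun a b c hab hbc => ?_ }
    · by_cases h : a = b
      · exact fun _ _ => h
      · rcases maj_or_maj hl h with h | h <;> tauto
    · by_contra hac
      obtain ⟨u, hu, habc⟩ := exists_mem_ranks_of_maj_of_maj hab hbc
      have hca := (maj_or_maj hl habc.ne.2.1).resolve_left hac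
      obtain ⟨v, hv, hbca⟩ := exists_mem_ranks_of_maj_of_maj hbc hca
      obtain ⟨w, hw, hcab⟩ := exists_mem_ranks_of_maj_of_maj hca hab
      exact hD a b c ⟨⟨u, hlD u hu, habc⟩, ⟨v, hlD v hv, hbca⟩, ⟨w, hlD w hw, hcab⟩⟩

theorem stmt11_general {n : ℕ} (D : Set (Vote n)) :
    IsCondorcet D ↔
      ∀ a b c : Fin n, a < b → b < c → ∃ i j : Fin 3, DNever D a b c i j := by
  rw [isCondorcet_iff_forall_not_realizes_cycle]
  constructor
  · intro hD a b c hab hbc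
    by_contra h
    rw [not_exists_dNever_iff, isUnrestrictedOn_iff hab.ne (hab.trans hbc).ne hbc.ne] at h
    rcases h with h | h
    · exact hD a b c h
    · exact hD a c b h
  · intro hN x y z hcycle
    obtain ⟨v, -, hxyz⟩ := hcycle.1
    obtain ⟨hxy, hxz, hyz⟩ := hxyz.ne
    obtain ⟨a, b, c, hab, hbc, habc⟩ := Finset.exists_lt_lt_eq_of_card_eq_three
      (Finset.card_eq_three.2 ⟨x, y, z, hxy, hxz, hyz, rfl⟩)
    refine (not_exists_dNever_iff a b c).2 ?_ (hN a b c hab hbc)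
    rw [← habc, isUnrestrictedOn_iff hxy hxz hyz]
    exact Or.inl hcycle

/-- (Sen) A domain is a Condorcet domain iff every triple of alternatives
satisfies some never condition. -/
theorem stmt11 {n : ℕ} (hn : 3 ≤ n) (D : Set (Vote n)) :
    IsCondorcet D ↔
      ∀ a b c : Fin n, a < b → b < c → ∃ i j : Fin 3, DNever D a b c i j :=
  stmt11_general D
end
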